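/- arXiv:2406.11777 — 2 statements merged into one kernel-verified Lean document; each statement's English description precedes it below -/
import Mathlib

section
/- Every domino d = s_k ∪ s_l in a hamiltonian disk D that does not respect the hamiltonian cycle γ and is distinct from s_1 ∪ s_n lies either entirely in the interior or entirely in the exterior of the simple closed curve determined by γ. -/
/-- Two unit squares, identified with their lower-left lattice points, are adjacent
(share an edge) iff their lattice points are at L¹-distance 1. -/
def Adj (p q : ℤ × ℤ) : Prop := (p.1 - q.1).natAbs + (p.2 - q.2).natAbs = 1

instance (p q : ℤ × ℤ) : Decidable (Adj p q) := inferInstanceAs (Decidable (_ = 1))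

/-- `s` enumerates (1-indexed, `s 1, …, s n`) a hamiltonian cycle of the finite set of
squares `D`: it is a bijective enumeration of `D` in which consecutive squares are
adjacent and the last square is adjacent to the first. -/
def HamCycleOn (D : Finset (ℤ × ℤ)) (n : ℕ) (s : ℕ → ℤ × ℤ) : Prop :=
  (∀ i ∈ Finset.Icc 1 n, s i ∈ D) ∧
  (∀ p ∈ D, ∃ i ∈ Finset.Icc 1 n, s i = p) ∧
  (∀ i ∈ Finset.Icc 1 n, ∀ j ∈ Finset.Icc 1 n, s i = s j → i = j) ∧
  (∀ i, 1 ≤ i → i < n → Adj (s i) (s (i + 1))) ∧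
  Adj (s n) (s 1)

/-- The closed unit square with lower-left corner `p`. -/
noncomputable def UnitSq (p : ℤ × ℤ) : Set (ℝ × ℝ) :=
  Set.Icc (p.1 : ℝ) (p.1 + 1) ×ˢ Set.Icc (p.2 : ℝ) (p.2 + 1)

/-- The planar region covered by a finite set of squares. -/
noncomputable def Region (D : Finset (ℤ × ℤ)) : Set (ℝ × ℝ) := ⋃ p ∈ D, UnitSq p

/-- A quadriculated disk: the associated planar region is homeomorphic to a closed disk. -/
def IsDisk (D : Finset (ℤ × ℤ)) : Prop :=
  Nonempty (↥(Region D) ≃ₜ ↥(Metric.closedBall (0 : ℝ × ℝ) 1))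

/-- The center of a unit square. -/
noncomputable def Center (p : ℤ × ℤ) : ℝ × ℝ := ((p.1 : ℝ) + 1 / 2, (p.2 : ℝ) + 1 / 2)

/-- The closed polygonal curve joining, in order, the centers of `s 1, …, s n, s 1`. -/
noncomputable def Curve (n : ℕ) (s : ℕ → ℤ × ℤ) : Set (ℝ × ℝ) :=
  (⋃ i ∈ Finset.Ico 1 n, segment ℝ (Center (s i)) (Center (s (i + 1)))) ∪
    segment ℝ (Center (s n)) (Center (s 1))

/-- Points in the interior (bounded complementary component) of a curve `C`. -/
def InteriorPts (C : Set (ℝ × ℝ)) : Set (ℝ × ℝ) :=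
  {x | x ∉ C ∧ Bornology.IsBounded (connectedComponentIn Cᶜ x)}

/-- Points in the exterior (unbounded complementary component) of a curve `C`. -/
def ExteriorPts (C : Set (ℝ × ℝ)) : Set (ℝ × ℝ) :=
  {x | x ∉ C ∧ ¬ Bornology.IsBounded (connectedComponentIn Cᶜ x)}

lemma adj_cases' {p q : ℤ × ℤ} (h : Adj p q) :
    (p.1 = q.1 ∧ (q.2 - p.2 = 1 ∨ q.2 - p.2 = -1)) ∨
    (p.2 = q.2 ∧ (q.1 - p.1 = 1 ∨ q.1 - p.1 = -1)) := by
  unfold Adj at h; omega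

lemma perp_case' {c d e : ℤ} {t : ℝ} (he : e = 1 ∨ e = -1) (ht : t ∈ Set.Ioo (0:ℝ) 1)
    (h : (c:ℝ) + 1/2 + t * (e:ℝ) = (d:ℝ) + 1/2) : False := by
  obtain ⟨ht0, ht1⟩ := ht
  rcases he with rfl | rfl
  · have h1 : (0:ℝ) < ((d - c : ℤ):ℝ) := by push_cast; linarith
    have h2 : ((d - c : ℤ):ℝ) < 1 := by push_cast; linarith
    have h1' : (0:ℤ) < d - c := by exact_mod_cast h1
    have h2' : (d - c : ℤ) < 1 := by exact_mod_cast h2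
    omega
  · have h1 : (0:ℝ) < ((c - d : ℤ):ℝ) := by push_cast; linarith
    have h2 : ((c - d : ℤ):ℝ) < 1 := by push_cast; linarith
    have h1' : (0:ℤ) < c - d := by exact_mod_cast h1
    have h2' : (c - d : ℤ) < 1 := by exact_mod_cast h2
    omega

lemma par_case' {c d e f : ℤ} {t u : ℝ} (he : e = 1 ∨ e = -1) (hf : f = 1 ∨ f = -1)
    (ht : t ∈ Set.Ioo (0:ℝ) 1) (hu : u ∈ Set.Icc (0:ℝ) 1)
    (h : (c:ℝ) + 1/2 + t * (e:ℝ) = (d:ℝ) + 1/2 + u * (f:ℝ)) :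
    (d = c ∧ f = e) ∨ (d = c + e ∧ f = -e) := by
  obtain ⟨ht0, ht1⟩ := ht
  obtain ⟨hu0, hu1⟩ := hu
  rcases he with rfl | rfl <;> rcases hf with rfl | rfl
  · left
    have h1 : ((c - d : ℤ):ℝ) < 1 := by push_cast; linarith
    have h2 : (-1:ℝ) < ((c - d : ℤ):ℝ) := by push_cast; linarith
    have h1' : (c - d : ℤ) < 1 := by exact_mod_cast h1
    have h2' : (-1:ℤ) < c - d := by exact_mod_cast h2
    omega
  · right
    have h1 : (0:ℝ) < ((d - c : ℤ):ℝ) := by push_cast; linarith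
    have h2 : ((d - c : ℤ):ℝ) < 2 := by push_cast; linarith
    have h1' : (0:ℤ) < d - c := by exact_mod_cast h1
    have h2' : (d - c : ℤ) < 2 := by exact_mod_cast h2
    omega
  · right
    have h1 : (0:ℝ) < ((c - d : ℤ):ℝ) := by push_cast; linarith
    have h2 : ((c - d : ℤ):ℝ) < 2 := by push_cast; linarith
    have h1' : (0:ℤ) < c - d := by exact_mod_cast h1
    have h2' : (c - d : ℤ) < 2 := by exact_mod_cast h2
    omega
  · left
    have h1 : ((c - d : ℤ):ℝ) < 1 := by push_cast; linarith
    have h2 : (-1:ℝ) < ((c - d : ℤ):ℝ) := by push_cast; linarith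
    have h1' : (c - d : ℤ) < 1 := by exact_mod_cast h1
    have h2' : (-1:ℤ) < c - d := by exact_mod_cast h2
    omega

lemma seg_disjoint' {p q a b : ℤ × ℤ} (hpq : Adj p q) (hab : Adj a b)
    (h1 : ¬(a = p ∧ b = q)) (h2 : ¬(a = q ∧ b = p)) (x : ℝ × ℝ)
    (hx1 : x ∈ openSegment ℝ (Center p) (Center q))
    (hx2 : x ∈ segment ℝ (Center a) (Center b)) : False := by
  rw [openSegment_eq_image] at hx1
  rw [segment_eq_image] at hx2
  obtain ⟨t, ht, hxt⟩ := hx1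
  obtain ⟨u, hu, hxu⟩ := hx2
  have e1 : x.1 = (p.1:ℝ) + 1/2 + t * ((q.1 - p.1 : ℤ):ℝ) := by
    have := congrArg Prod.fst hxt; simp [Center] at this; push_cast; rw [← this]; ring
  have e2 : x.2 = (p.2:ℝ) + 1/2 + t * ((q.2 - p.2 : ℤ):ℝ) := by
    have := congrArg Prod.snd hxt; simp [Center] at this; push_cast; rw [← this]; ring
  have e3 : x.1 = (a.1:ℝ) + 1/2 + u * ((b.1 - a.1 : ℤ):ℝ) := by
    have := congrArg Prod.fst hxu; simp [Center] at this; push_cast; rw [← this]; ring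
  have e4 : x.2 = (a.2:ℝ) + 1/2 + u * ((b.2 - a.2 : ℤ):ℝ) := by
    have := congrArg Prod.snd hxu; simp [Center] at this; push_cast; rw [← this]; ring
  rcases adj_cases' hpq with ⟨hv, he⟩ | ⟨hh, he⟩ <;>
    rcases adj_cases' hab with ⟨hv', hf⟩ | ⟨hh', hf⟩
  · -- both vertical
    -- first coordinates constant:
    have c1 : (p.1:ℝ) + 1/2 = (a.1:ℝ) + 1/2 := by
      have hq : ((q.1 - p.1 : ℤ):ℝ) = 0 := by rw [hv]; simp
      have hb : ((b.1 - a.1 : ℤ):ℝ) = 0 := by rw [hv']; simp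
      rw [e1, hq] at e3; rw [hb] at e3; linarith
    have c1' : p.1 = a.1 := by
      have : (p.1:ℝ) = (a.1:ℝ) := by linarith
      exact_mod_cast this
    have := par_case' he hf ht hu (by rw [← e2, e4])
    rcases this with ⟨hd, hfe⟩ | ⟨hd, hfe⟩
    · exact h1 ⟨Prod.ext c1'.symm (by omega), Prod.ext (by omega) (by omega)⟩
    · exact h2 ⟨Prod.ext (by omega) (by omega), Prod.ext (by omega) (by omega)⟩
  · -- p vertical, a horizontal: second coordinate of curve segment is constant
    have hb : ((b.2 - a.2 : ℤ):ℝ) = 0 := by rw [hh']; simp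
    rw [hb] at e4
    exact perp_case' he ht (by rw [← e2, e4]; ring)
  · -- p horizontal, a vertical
    have hb : ((b.1 - a.1 : ℤ):ℝ) = 0 := by rw [hv']; simp
    rw [hb] at e3
    exact perp_case' he ht (by rw [← e1, e3]; ring)
  · -- both horizontal
    have c1 : (p.2:ℝ) + 1/2 = (a.2:ℝ) + 1/2 := by
      have hq : ((q.2 - p.2 : ℤ):ℝ) = 0 := by rw [hh]; simp
      have hb : ((b.2 - a.2 : ℤ):ℝ) = 0 := by rw [hh']; simp
      rw [e2, hq] at e4; rw [hb] at e4; linarith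
    have c1' : p.2 = a.2 := by
      have : (p.2:ℝ) = (a.2:ℝ) := by linarith
      exact_mod_cast this
    have := par_case' he hf ht hu (by rw [← e1, e3])
    rcases this with ⟨hd, hfe⟩ | ⟨hd, hfe⟩
    · exact h1 ⟨Prod.ext (by omega) c1'.symm, Prod.ext (by omega) (by omega)⟩
    · exact h2 ⟨Prod.ext (by omega) (by omega), Prod.ext (by omega) (by omega)⟩

/-- A domino `d = s_k ∪ s_l` of a hamiltonian quadriculated disk that does not respect
the hamiltonian cycle `γ` and is distinct from `s_1 ∪ s_n` lies entirely in the
interior or entirely in the exterior of the simple closed curve determined by `γ`: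
the open segment between the centers of its two squares is contained in the bounded
complementary component of the curve, or in the unbounded one. -/
theorem stmt_8 (D : Finset (ℤ × ℤ)) (n : ℕ) (s : ℕ → ℤ × ℤ)
    (hdisk : IsDisk D) (hγ : HamCycleOn D n s) (hn : 3 ≤ n)
    (k l : ℕ) (hk : 1 ≤ k) (hkl : k < l) (hl : l ≤ n)
    (hadj : Adj (s k) (s l))
    (hnr₁ : l ≠ k + 1) (hnr₂ : ¬(k = 1 ∧ l = n)) :
    openSegment ℝ (Center (s k)) (Center (s l)) ⊆ InteriorPts (Curve n s) ∨
      openSegment ℝ (Center (s k)) (Center (s l)) ⊆ ExteriorPts (Curve n s) := by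
  obtain ⟨hD, hsurj, hinj, hadjc, hadjn⟩ := hγ
  set S := openSegment ℝ (Center (s k)) (Center (s l)) with hS
  have hkm : k ∈ Finset.Icc 1 n := Finset.mem_Icc.mpr ⟨hk, le_trans (le_of_lt hkl) hl⟩
  have hlm : l ∈ Finset.Icc 1 n := Finset.mem_Icc.mpr ⟨le_trans hk (le_of_lt hkl), hl⟩
  -- the open segment misses the curve
  have hdis : S ⊆ (Curve n s)ᶜ := by
    intro x hx hxc
    rcases hxc with hxc | hxc
    · simp only [Set.mem_iUnion] at hxc
      obtain ⟨i, hi, hxi⟩ := hxc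
      rw [Finset.mem_Ico] at hi
      have him : i ∈ Finset.Icc 1 n := Finset.mem_Icc.mpr ⟨hi.1, le_of_lt hi.2⟩
      have hi1m : i + 1 ∈ Finset.Icc 1 n := Finset.mem_Icc.mpr ⟨by omega, hi.2⟩
      refine seg_disjoint' hadj (hadjc i hi.1 hi.2) ?_ ?_ x hx hxi
      · rintro ⟨ha, hb⟩
        have := hinj i him k hkm ha
        have := hinj (i+1) hi1m l hlm hb
        omega
      · rintro ⟨ha, hb⟩
        have := hinj i him l hlm ha
        have := hinj (i+1) hi1m k hkm hb
        omega
    · have hnm : n ∈ Finset.Icc 1 n := Finset.mem_Icc.mpr ⟨by omega, le_refl n⟩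
      have h1m : 1 ∈ Finset.Icc 1 n := Finset.mem_Icc.mpr ⟨le_refl 1, by omega⟩
      refine seg_disjoint' hadj hadjn ?_ ?_ x hx hxc
      · rintro ⟨ha, hb⟩
        have := hinj n hnm k hkm ha
        have := hinj 1 h1m l hlm hb
        omega
      · rintro ⟨ha, hb⟩
        have := hinj n hnm l hlm ha
        have := hinj 1 h1m k hkm hb
        omega
  -- the open segment is nonempty and preconnected
  have hne : S.Nonempty := by
    rw [hS, openSegment_eq_image]
    exact (Set.nonempty_Ioo.mpr (by norm_num)).image _
  obtain ⟨x0, hx0⟩ := hne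
  have hconn : IsPreconnected S := ((convex_openSegment (𝕜 := ℝ) (Center (s k)) (Center (s l))).isPreconnected)
  have hsub : S ⊆ connectedComponentIn (Curve n s)ᶜ x0 :=
    hconn.subset_connectedComponentIn hx0 hdis
  by_cases hb : Bornology.IsBounded (connectedComponentIn (Curve n s)ᶜ x0)
  · left
    intro x hx
    refine ⟨hdis hx, ?_⟩
    rwa [← connectedComponentIn_eq (hsub hx)]
  · right
    intro x hx
    refine ⟨hdis hx, ?_⟩
    rwa [← connectedComponentIn_eq (hsub hx)]
end

section
/- In a hamiltonian quadriculated disk D with cycle γ and s_1 = s_SW, and a non-respecting domino d with D ∖ d connected, there exist squares s_i ∈ D_{d,±1} and s_j ∈ D_{d,0} that are adjacent, i.e., there is a domino d̃ = s_i ∪ s_j joining the two regions; moreover D ∖ d̃ is connected and s_i ≠ s_1. -/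
/-- A set of squares is connected if any two of its squares are joined by a chain of
adjacent squares inside the set. -/
def ConnOn (S : Set (ℤ × ℤ)) : Prop :=
  ∀ p ∈ S, ∀ q ∈ S, Relation.ReflTransGen (fun a b => Adj a b ∧ a ∈ S ∧ b ∈ S) p q


/-!
Removing a square `s_i` of the arc `D_{d,±1}` and a square `s_j` of the arc `D_{d,0}` cuts the
hamiltonian cycle into two paths, one through `s_k` and one through `s_l`; the edge `s_k s_l`
rejoins them, so `D ∖ d̃` stays connected. Such a pair `i, j` exists because a path in `D ∖ d`
from `D_{d,±1}` to `D_{d,0}` has to cross between them somewhere. Finally `i = 1` is impossible: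
the corner `s_1` has only the two neighbours `s_2` and `s_n`, neither of which lies in `D_{d,0}`.
-/

open Relation Finset

theorem Relation.ReflTransGen.exists_rel_not_of {α : Type*} {r : α → α → Prop} {P : α → Prop}
    {a b : α} (h : ReflTransGen r a b) (ha : ¬ P a) (hb : P b) :
    ∃ x y, r x y ∧ ¬ P x ∧ P y := by
  induction h with
  | refl => exact absurd hb ha
  | @tail c d _ hcd ih =>
    by_cases hc : P c
    · exact ih hc
    · exact ⟨c, d, hcd, hc, hb⟩

theorem Adj.symm {p q : ℤ × ℤ} (h : Adj p q) : Adj q p := by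
  unfold Adj at *; omega

/-- `ConnOn S` says that `ReflTransGen (AdjIn S)` relates any two points of `S`. -/
def AdjIn (S : Set (ℤ × ℤ)) (p q : ℤ × ℤ) : Prop := Adj p q ∧ p ∈ S ∧ q ∈ S

theorem AdjIn.symm {S : Set (ℤ × ℤ)} {p q : ℤ × ℤ} (h : AdjIn S p q) : AdjIn S q p :=
  ⟨h.1.symm, h.2.2, h.2.1⟩

instance (S : Set (ℤ × ℤ)) : Std.Symm (AdjIn S) := ⟨fun _ _ => AdjIn.symm⟩

theorem connOn_of_forall_reflTransGen {S : Set (ℤ × ℤ)} (c : ℤ × ℤ)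
    (hc : ∀ p ∈ S, ReflTransGen (AdjIn S) p c) : ConnOn S :=
  fun p hp q hq => (hc p hp).trans (symm (hc q hq))

theorem reflTransGen_adjIn_of_chain {S : Set (ℤ × ℤ)} (s : ℕ → ℤ × ℤ) {a b : ℕ}
    (hmem : ∀ m ∈ Set.uIcc a b, s m ∈ S)
    (hstep : ∀ m, min a b ≤ m → m < max a b → Adj (s m) (s (m + 1))) :
    ReflTransGen (AdjIn S) (s a) (s b) := by
  have hedge : ∀ m, min a b ≤ m → m < max a b → AdjIn S (s m) (s (m + 1)) := fun m h₁ h₂ =>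
    ⟨hstep m h₁ h₂, hmem m (by simp only [Set.mem_uIcc]; omega),
      hmem (m + 1) (by simp only [Set.mem_uIcc]; omega)⟩
  have hidx : ReflTransGen (fun i j => AdjIn S (s i) (s j)) a b :=
    reflTransGen_of_succ _ (fun m hm => hedge m (by grind) (by grind))
      (fun m hm => (hedge m (by grind) (by grind)).symm)
  exact hidx.lift s fun _ _ h => h

theorem eq_or_eq_of_adj_corner {D : Finset (ℤ × ℤ)} {a b : ℤ}
    (hb : ∀ p ∈ D, b ≤ p.2) (ha : ∀ p ∈ D, p.2 = b → a ≤ p.1)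
    {x : ℤ × ℤ} (hx : x ∈ D) (hadj : Adj (a, b) x) : x = (a + 1, b) ∨ x = (a, b + 1) := by
  obtain ⟨x₁, x₂⟩ := x
  have hbx := hb _ hx
  have hax := ha _ hx
  unfold Adj at hadj
  dsimp only at hadj hbx hax
  by_cases hx₂ : x₂ = b
  · have := hax hx₂
    left; ext <;> dsimp only <;> omega
  · right; ext <;> dsimp only <;> omega

namespace HamCycleOn

variable {D : Finset (ℤ × ℤ)} {n : ℕ} {s : ℕ → ℤ × ℤ}

theorem injOn (hγ : HamCycleOn D n s) {i j : ℕ} (hi : 1 ≤ i ∧ i ≤ n) (hj : 1 ≤ j ∧ j ≤ n)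
    (h : s i = s j) : i = j :=
  hγ.2.2.1 i (mem_Icc.2 hi) j (mem_Icc.2 hj) h

theorem mem_sdiff_pair (hγ : HamCycleOn D n s) {p q m : ℕ} (hp : 1 ≤ p ∧ p ≤ n)
    (hq : 1 ≤ q ∧ q ≤ n) (hm : 1 ≤ m ∧ m ≤ n) (hmp : m ≠ p) (hmq : m ≠ q) :
    s m ∈ (↑D : Set (ℤ × ℤ)) \ {s p, s q} := by
  refine ⟨hγ.1 m (mem_Icc.2 hm), ?_⟩
  rintro (h | h)
  exacts [hmp (hγ.injOn hm hp h), hmq (hγ.injOn hm hq (Set.mem_singleton_iff.1 h))]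

theorem exists_index_of_mem_sdiff_pair (hγ : HamCycleOn D n s) {p q : ℕ} {x : ℤ × ℤ}
    (hx : x ∈ (↑D : Set (ℤ × ℤ)) \ {s p, s q}) :
    ∃ m, (1 ≤ m ∧ m ≤ n) ∧ m ≠ p ∧ m ≠ q ∧ s m = x := by
  obtain ⟨m, hm, rfl⟩ := hγ.2.1 x hx.1
  refine ⟨m, mem_Icc.1 hm, ?_, ?_, rfl⟩ <;> rintro rfl <;> simp at hx

variable {p q : ℕ}

theorem reflTransGen_of_avoid (hγ : HamCycleOn D n s) (hp : 1 ≤ p ∧ p ≤ n) (hq : 1 ≤ q ∧ q ≤ n)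
    {a b : ℕ} (ha : 1 ≤ a ∧ a ≤ n) (hb : 1 ≤ b ∧ b ≤ n)
    (havoid : ∀ m ∈ Set.uIcc a b, m ≠ p ∧ m ≠ q) :
    ReflTransGen (AdjIn ((↑D : Set (ℤ × ℤ)) \ {s p, s q})) (s a) (s b) := by
  refine reflTransGen_adjIn_of_chain s (fun m hm => ?_) fun m h₁ h₂ => hγ.2.2.2.1 m ?_ ?_
  · have := Set.mem_uIcc.1 hm
    exact hγ.mem_sdiff_pair hp hq (by omega) (havoid m hm).1 (havoid m hm).2
  all_goals omega

/-- The outer arc `s (q+1), …, s n, s 1, …, s (p-1)` is a path thanks to the closing edge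
`s n s 1`. -/
theorem reflTransGen_of_outer (hγ : HamCycleOn D n s) (hp : 1 ≤ p) (hpq : p < q) (hq : q ≤ n)
    {a b : ℕ} (ha : 1 ≤ a ∧ a < p ∨ q < a ∧ a ≤ n) (hb : 1 ≤ b ∧ b < p ∨ q < b ∧ b ≤ n) :
    ReflTransGen (AdjIn ((↑D : Set (ℤ × ℤ)) \ {s p, s q})) (s a) (s b) := by
  wlog hab : a ≤ b generalizing a b
  · exact symm (this hb ha (by omega))
  have avoid : ∀ {c d : ℕ}, (1 ≤ c ∧ c < p ∨ q < c ∧ c ≤ n) → (1 ≤ d ∧ d < p ∨ q < d ∧ d ≤ n) →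
      (c < p ∧ d < p ∨ q < c ∧ q < d) → ∀ m ∈ Set.uIcc c d, m ≠ p ∧ m ≠ q := by
    intro c d hc hd hcd m hm
    rw [Set.mem_uIcc] at hm
    omega
  by_cases hside : b < p ∨ q < a
  · exact hγ.reflTransGen_of_avoid (by omega) (by omega) (by omega) (by omega)
      (avoid ha hb (by omega))
  · have h₁ : 1 < p := by omega
    have hn : q < n := by omega
    have hwrap : AdjIn ((↑D : Set (ℤ × ℤ)) \ {s p, s q}) (s 1) (s n) :=
      ⟨hγ.2.2.2.2.symm, hγ.mem_sdiff_pair (by omega) (by omega) (by omega) (by omega) (by omega),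
        hγ.mem_sdiff_pair (by omega) (by omega) (by omega) (by omega) (by omega)⟩
    exact (hγ.reflTransGen_of_avoid (by omega) (by omega) (by omega) (by omega)
        (avoid ha (Or.inl ⟨le_rfl, h₁⟩) (by omega))).tail hwrap |>.trans
      (hγ.reflTransGen_of_avoid (by omega) (by omega) (by omega) (by omega)
        (avoid (Or.inr ⟨hn, le_rfl⟩) hb (by omega)))

theorem connOn_sdiff_pair (hγ : HamCycleOn D n s) (hp : 1 ≤ p) (hpq : p < q) (hq : q ≤ n)
    {u v : ℕ} (hu : p < u ∧ u < q) (hv : 1 ≤ v ∧ v < p ∨ q < v ∧ v ≤ n) (huv : Adj (s u) (s v)) :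
    ConnOn ((↑D : Set (ℤ × ℤ)) \ {s p, s q}) := by
  have hsu := hγ.mem_sdiff_pair (p := p) (q := q) (m := u) (by omega) (by omega) (by omega)
    (by omega) (by omega)
  have hsv := hγ.mem_sdiff_pair (p := p) (q := q) (m := v) (by omega) (by omega) (by omega)
    (by omega) (by omega)
  refine connOn_of_forall_reflTransGen (s u) fun x hx => ?_
  obtain ⟨m, hm, hmp, hmq, rfl⟩ := hγ.exists_index_of_mem_sdiff_pair hx
  by_cases hmid : p < m ∧ m < q
  · refine hγ.reflTransGen_of_avoid (by omega) (by omega) hm (by omega) fun c hc => ?_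
    rw [Set.mem_uIcc] at hc
    omega
  · exact (hγ.reflTransGen_of_outer hp hpq hq (by omega) hv).tail ⟨huv.symm, hsv, hsu⟩

theorem eq_two_or_eq_of_adj_one (hγ : HamCycleOn D n s) (hn : 3 ≤ n) {a b : ℤ}
    (h1 : s 1 = (a, b)) (hb : ∀ p ∈ D, b ≤ p.2) (ha : ∀ p ∈ D, p.2 = b → a ≤ p.1)
    {j : ℕ} (hj : 1 ≤ j ∧ j ≤ n) (hadj : Adj (s 1) (s j)) : j = 2 ∨ j = n := by
  have corner := fun m (hm : 1 ≤ m ∧ m ≤ n) (h : Adj (s 1) (s m)) =>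
    eq_or_eq_of_adj_corner hb ha (hγ.1 m (mem_Icc.2 hm)) (h1 ▸ h)
  have h2 := corner 2 (by omega) (hγ.2.2.2.1 1 le_rfl (by omega))
  have hn' := corner n (by omega) hγ.2.2.2.2.symm
  have h2n : s 2 ≠ s n := fun h => by have := hγ.injOn (by omega) (by omega) h; omega
  have hsj : s j = s 2 ∨ s j = s n := by
    rcases corner j hj hadj with h | h <;> rcases h2 with h₂ | h₂ <;> rcases hn' with hₙ | hₙ <;>
      simp_all
  exact hsj.imp (hγ.injOn hj (by omega)) (hγ.injOn hj (by omega))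

theorem exists_adj_of_connOn (hγ : HamCycleOn D n s) {k l : ℕ} (hk : 1 ≤ k) (hkl : k + 1 < l)
    (hl : l ≤ n) (hconn : ConnOn ((↑D : Set (ℤ × ℤ)) \ {s k, s l}))
    {m : ℕ} (hm : 1 ≤ m ∧ m ≤ n) (hmout : m < k ∨ l < m) :
    ∃ i, (1 ≤ i ∧ i ≤ n) ∧ (i < k ∨ l < i) ∧ ∃ j, k < j ∧ j < l ∧ Adj (s i) (s j) := by
  have hpath := hconn (s m) (hγ.mem_sdiff_pair (by omega) (by omega) hm (by omega) (by omega))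
    (s (k + 1)) (hγ.mem_sdiff_pair (by omega) (by omega) (by omega) (by omega) (by omega))
  obtain ⟨x, y, hxy, hx, ⟨j, hj, rfl⟩⟩ :=
    hpath.exists_rel_not_of (P := (· ∈ s '' Set.Ioo k l))
      (fun ⟨t, ht, hst⟩ => by have := hγ.injOn (by grind) hm hst; grind)
      ⟨k + 1, by grind, rfl⟩
  obtain ⟨i, hi, hik, hil, rfl⟩ := hγ.exists_index_of_mem_sdiff_pair hxy.2.1
  refine ⟨i, hi, ?_, j, (Set.mem_Ioo.1 hj).1, (Set.mem_Ioo.1 hj).2, hxy.1⟩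
  by_contra! h
  exact hx ⟨i, Set.mem_Ioo.2 ⟨by omega, by omega⟩, rfl⟩

end HamCycleOn

theorem stmt_14_general (D : Finset (ℤ × ℤ)) (n : ℕ) (s : ℕ → ℤ × ℤ)
    (hγ : HamCycleOn D n s)
    (a b : ℤ) (h1 : s 1 = (a, b))
    (hb : ∀ p ∈ D, b ≤ p.2) (ha : ∀ p ∈ D, p.2 = b → a ≤ p.1)
    (k l : ℕ) (hk : 1 ≤ k) (hkl : k < l) (hl : l ≤ n)
    (hadj : Adj (s k) (s l))
    (hnr₁ : l ≠ k + 1) (hnr₂ : ¬(k = 1 ∧ l = n))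
    (hconn : ConnOn ((↑D : Set (ℤ × ℤ)) \ {s k, s l})) :
    ∃ i ∈ Finset.Icc 1 n, ∃ j ∈ Finset.Icc 1 n,
      (i < k ∨ l < i) ∧ k < j ∧ j < l ∧
      Adj (s i) (s j) ∧ i ≠ 1 ∧
      ConnOn ((↑D : Set (ℤ × ℤ)) \ {s i, s j}) := by
  have hkl' : k + 1 < l := by omega
  obtain ⟨m, hm, hmout⟩ : ∃ m, (1 ≤ m ∧ m ≤ n) ∧ (m < k ∨ l < m) := by
    by_cases hk1 : k = 1
    · exact ⟨n, by omega, by omega⟩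
    · exact ⟨1, by omega, by omega⟩
  obtain ⟨i, hi, hout, j, hkj, hjl, hij⟩ := hγ.exists_adj_of_connOn hk hkl' hl hconn hm hmout
  refine ⟨i, mem_Icc.2 hi, j, mem_Icc.2 ⟨by omega, by omega⟩, hout, hkj, hjl, hij, ?_, ?_⟩
  · rintro rfl
    have := hγ.eq_two_or_eq_of_adj_one (by omega) h1 hb ha (j := j) (by omega) hij
    omega
  · rcases hout with hik | hli
    · exact hγ.connOn_sdiff_pair hi.1 (by omega) (by omega) (u := k) (v := l) (by omega)
        (by omega) hadj
    · rw [Set.pair_comm]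
      exact hγ.connOn_sdiff_pair (by omega) (by omega) hi.2 (u := l) (v := k) (by omega)
        (by omega) hadj.symm

/-- In a hamiltonian quadriculated disk with `s_1 = s_SW`, if the non-respecting domino
`d = s_k ∪ s_l` does not disconnect `D`, then there is a domino `d̃ = s_i ∪ s_j` with
`s_i ∈ D_{d,±1}`, `s_j ∈ D_{d,0}`, `s_i ≠ s_1`, and `D ∖ d̃` connected. -/
theorem stmt_14 (D : Finset (ℤ × ℤ)) (n : ℕ) (s : ℕ → ℤ × ℤ)
    (hdisk : IsDisk D) (hγ : HamCycleOn D n s) (hn : 3 ≤ n)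
    (a b : ℤ) (h1 : s 1 = (a, b))
    (hb : ∀ p ∈ D, b ≤ p.2) (ha : ∀ p ∈ D, p.2 = b → a ≤ p.1)
    (k l : ℕ) (hk : 1 ≤ k) (hkl : k < l) (hl : l ≤ n)
    (hadj : Adj (s k) (s l))
    (hnr₁ : l ≠ k + 1) (hnr₂ : ¬(k = 1 ∧ l = n))
    (hconn : ConnOn ((↑D : Set (ℤ × ℤ)) \ {s k, s l})) :
    ∃ i ∈ Finset.Icc 1 n, ∃ j ∈ Finset.Icc 1 n,
      (i < k ∨ l < i) ∧ k < j ∧ j < l ∧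
      Adj (s i) (s j) ∧ i ≠ 1 ∧
      ConnOn ((↑D : Set (ℤ × ℤ)) \ {s i, s j}) :=
  stmt_14_general D n s hγ a b h1 hb ha k l hk hkl hl hadj hnr₁ hnr₂ hconn
end
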